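/- arXiv:1504.06556 — 6 statements merged into one kernel-verified Lean document; each statement's English description precedes it below -/
import Mathlib

section
/- Let μ be a (nonnegative) measure on [0,∞) and let h₁, h₂ : [0,∞) → ℂ be μ-integrable. If ∫_{[0,∞)} e^{−s t} h₁(t) dμ(t) = ∫_{[0,∞)} e^{−s t} h₂(t) dμ(t) for every real s ≥ 0, then h₁ = h₂ μ-almost everywhere. -/
/-!
Substituting `x = exp (-t)` turns the Laplace transform at `s = n` into the `n`-th moment of a
density on `[0, 1]` against the pushed-forward measure. By Weierstrass approximation, vanishing
moments force the integral against every continuous function, in particular against every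
smooth compactly supported one, to vanish, so the density is zero almost everywhere.
-/

open MeasureTheory Set

variable {E : Type*} [NormedAddCommGroup E] [NormedSpace ℝ E] {f : ℝ → E}

section MomentUniqueness

variable {m : Measure ℝ} {a b : ℝ}

theorem integrable_smul_of_continuous_of_ae_mem_Icc (hf : Integrable f m)
    (hm : ∀ᵐ x ∂m, x ∈ Icc a b) {g : ℝ → ℝ} (hg : Continuous g) :
    Integrable (fun x => g x • f x) m := by
  obtain ⟨C, hC⟩ := isCompact_Icc.exists_bound_of_continuousOn hg.continuousOn
  exact hf.bdd_smul C hg.aestronglyMeasurable (hm.mono hC)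

theorem integral_polynomial_eval_smul_eq_zero (hf : Integrable f m)
    (hm : ∀ᵐ x ∂m, x ∈ Icc a b) (hmom : ∀ n : ℕ, ∫ x, x ^ n • f x ∂m = 0)
    (p : Polynomial ℝ) : ∫ x, p.eval x • f x ∂m = 0 := by
  induction p using Polynomial.induction_on' with
  | add p q hp hq =>
    simp only [Polynomial.eval_add, add_smul]
    rw [integral_add (integrable_smul_of_continuous_of_ae_mem_Icc hf hm p.continuous)
      (integrable_smul_of_continuous_of_ae_mem_Icc hf hm q.continuous), hp, hq, add_zero]
  | monomial n c =>
    simp only [Polynomial.eval_monomial, mul_smul]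
    rw [integral_smul, hmom, smul_zero]

theorem integral_smul_eq_zero_of_continuous (hf : Integrable f m)
    (hm : ∀ᵐ x ∂m, x ∈ Icc a b) (hpoly : ∀ p : Polynomial ℝ, ∫ x, p.eval x • f x ∂m = 0)
    {g : ℝ → ℝ} (hg : Continuous g) : ∫ x, g x • f x ∂m = 0 := by
  refine eq_of_forall_dist_le fun ε hε => ?_
  set A := ∫ x, ‖f x‖ ∂m
  have hA : 0 ≤ A := integral_nonneg fun _ => norm_nonneg _
  obtain ⟨p, hp⟩ := exists_polynomial_near_of_continuousOn a b g hg.continuousOn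
    (ε / (A + 1)) (by positivity)
  calc dist (∫ x, g x • f x ∂m) 0 = ‖∫ x, (g x - p.eval x) • f x ∂m‖ := by
        simp only [sub_smul]
        rw [integral_sub (integrable_smul_of_continuous_of_ae_mem_Icc hf hm hg)
          (integrable_smul_of_continuous_of_ae_mem_Icc hf hm p.continuous), hpoly, sub_zero,
          dist_zero_right]
    _ ≤ ∫ x, ε / (A + 1) * ‖f x‖ ∂m := by
        refine norm_integral_le_of_norm_le (hf.norm.const_mul _) ?_
        filter_upwards [hm] with x hx
        rw [norm_smul, Real.norm_eq_abs, abs_sub_comm]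
        gcongr
        exact (hp x hx).le
    _ = ε / (A + 1) * A := integral_const_mul _ _
    _ ≤ ε := by
        rw [div_mul_eq_mul_div, div_le_iff₀ (by positivity)]
        nlinarith

theorem ae_eq_zero_of_forall_integral_pow_smul_eq_zero [CompleteSpace E] (hf : Integrable f m)
    (hm : ∀ᵐ x ∂m, x ∈ Icc a b) (hmom : ∀ n : ℕ, ∫ x, x ^ n • f x ∂m = 0) :
    ∀ᵐ x ∂m, f x = 0 :=
  ae_eq_zero_of_integral_contDiff_smul_eq_zero hf.locallyIntegrable fun _ hg _ =>
    integral_smul_eq_zero_of_continuous hf hm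
      (integral_polynomial_eval_smul_eq_zero hf hm hmom) hg.continuous

end MomentUniqueness

theorem measurableEmbedding_exp_neg : MeasurableEmbedding fun t : ℝ => Real.exp (-t) :=
  Real.isOpenEmbedding_exp.measurableEmbedding.comp measurableEmbedding_neg

section Laplace

variable {ν : Measure ℝ}

theorem integrable_exp_neg_mul_smul (hf : Integrable f ν) (hν : ∀ᵐ t ∂ν, 0 ≤ t) {s : ℝ}
    (hs : 0 ≤ s) : Integrable (fun t => Real.exp (-(s * t)) • f t) ν := by
  refine hf.bdd_smul 1 (by fun_prop) (hν.mono fun t ht => ?_)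
  rw [Real.norm_eq_abs, Real.abs_exp, Real.exp_le_one_iff, neg_nonpos]
  exact mul_nonneg hs ht

theorem ae_eq_zero_of_forall_integral_exp_neg_nat_mul_smul_eq_zero [CompleteSpace E]
    (hf : Integrable f ν) (hν : ∀ᵐ t ∂ν, 0 ≤ t)
    (hlap : ∀ n : ℕ, ∫ t, Real.exp (-(n * t)) • f t ∂ν = 0) :
    ∀ᵐ t ∂ν, f t = 0 := by
  have hE := measurableEmbedding_exp_neg
  set F : ℝ → E := fun x => f (-Real.log x)
  have hFE : (F ∘ fun t => Real.exp (-t)) = f := funext fun t => by simp [F]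
  have hF : Integrable F (ν.map fun t => Real.exp (-t)) := hE.integrable_map_iff.mpr (hFE ▸ hf)
  have hm : ∀ᵐ x ∂ν.map (fun t => Real.exp (-t)), x ∈ Icc 0 1 :=
    hE.ae_map_iff.mpr (hν.mono fun t ht =>
      ⟨(Real.exp_pos _).le, Real.exp_le_one_iff.mpr (neg_nonpos.mpr ht)⟩)
  have hmom : ∀ n : ℕ, ∫ x, x ^ n • F x ∂ν.map (fun t => Real.exp (-t)) = 0 := fun n => by
    rw [hE.integral_map]
    simpa [F, ← Real.exp_nat_mul] using hlap n
  simpa [F] using hE.ae_map_iff.mp (ae_eq_zero_of_forall_integral_pow_smul_eq_zero hF hm hmom)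

end Laplace

/-- **Uniqueness theorem for Laplace transforms.**
If `μ` is a (nonnegative) measure on `[0,∞)` and `h₁, h₂` are `μ`-integrable complex densities
whose Laplace transforms agree at every real `s ≥ 0`, then `h₁ = h₂` `μ`-almost everywhere. -/
theorem laplace_uniqueness (μ : Measure ℝ) (h₁ h₂ : ℝ → ℂ)
    (hi₁ : IntegrableOn h₁ (Set.Ici 0) μ) (hi₂ : IntegrableOn h₂ (Set.Ici 0) μ)
    (heq : ∀ s : ℝ, 0 ≤ s →
      ∫ t in Set.Ici (0 : ℝ), (Real.exp (-(s * t)) : ℂ) * h₁ t ∂μ =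
      ∫ t in Set.Ici (0 : ℝ), (Real.exp (-(s * t)) : ℂ) * h₂ t ∂μ) :
    ∀ᵐ t ∂μ.restrict (Set.Ici 0), h₁ t = h₂ t := by
  have hν : ∀ᵐ t ∂μ.restrict (Ici 0), 0 ≤ t := ae_restrict_mem measurableSet_Ici
  have hlap (n : ℕ) : ∫ t in Ici 0, Real.exp (-(n * t)) • (h₁ t - h₂ t) ∂μ = 0 := by
    simp only [smul_sub]
    rw [integral_sub (integrable_exp_neg_mul_smul hi₁ hν n.cast_nonneg)
      (integrable_exp_neg_mul_smul hi₂ hν n.cast_nonneg)]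
    simpa only [Complex.real_smul, sub_eq_zero] using heq n n.cast_nonneg
  filter_upwards [ae_eq_zero_of_forall_integral_exp_neg_nat_mul_smul_eq_zero (hi₁.sub hi₂) hν hlap]
    with t ht
  exact sub_eq_zero.mp ht
end

section
/- Let σ be a real number, let μ be a (nonnegative) measure on [0,∞), and let h₁, h₂ : [0,∞) → ℂ be such that t ↦ e^{−σ t} h_i(t) is μ-integrable for i = 1, 2. If ∫_{[0,∞)} e^{−s t} h₁(t) dμ(t) = ∫_{[0,∞)} e^{−s t} h₂(t) dμ(t) for every real s ≥ σ, then h₁ = h₂ μ-almost everywhere. -/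
/-!
The substitution `x = e^{-t}` turns the Laplace transform of `e^{-σt}(h₁ - h₂)` at `s = σ + n`
into the `n`-th moment of an integrable function against a measure carried by `[0, 1]`.
By the Weierstrass approximation theorem, vanishing of all moments makes the integral against
every continuous, in particular every smooth compactly supported, function vanish, and such
test functions separate integrable functions.
-/

open MeasureTheory Filter Set Polynomial Topology

variable {E : Type*} [NormedAddCommGroup E] [NormedSpace ℝ E]

section Moments

variable {κ : Measure ℝ} {a b : ℝ} {F : ℝ → E}

theorem integrable_smul_of_ae_mem_Icc (hκ : ∀ᵐ x ∂κ, x ∈ Icc a b) (hF : Integrable F κ)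
    {g : ℝ → ℝ} (hg : Continuous g) : Integrable (fun x => g x • F x) κ := by
  obtain ⟨C, hC⟩ := isCompact_Icc.exists_bound_of_continuousOn hg.continuousOn
  exact hF.bdd_smul C hg.aestronglyMeasurable (hκ.mono hC)

theorem integral_eval_smul_eq_zero_of_forall_moment_eq_zero (hκ : ∀ᵐ x ∂κ, x ∈ Icc a b)
    (hF : Integrable F κ) (hmom : ∀ n : ℕ, ∫ x, x ^ n • F x ∂κ = 0) (p : ℝ[X]) :
    ∫ x, p.eval x • F x ∂κ = 0 := by
  have hsum : ∀ x,
      p.eval x • F x = ∑ i ∈ Finset.range (p.natDegree + 1), p.coeff i • x ^ i • F x := by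
    simp only [eval_eq_sum_range, Finset.sum_smul, mul_smul, implies_true]
  simp_rw [hsum]
  rw [integral_finsetSum (f := fun i x => p.coeff i • x ^ i • F x) _
    fun i _ => (integrable_smul_of_ae_mem_Icc hκ hF (continuous_pow i)).smul _]
  simp [integral_smul, hmom]

theorem integral_smul_eq_zero_of_forall_moment_eq_zero (hκ : ∀ᵐ x ∂κ, x ∈ Icc a b)
    (hF : Integrable F κ) (hmom : ∀ n : ℕ, ∫ x, x ^ n • F x ∂κ = 0) {g : ℝ → ℝ}
    (hg : Continuous g) : ∫ x, g x • F x ∂κ = 0 := by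
  have hbound : ∀ ε > 0, ‖∫ x, g x • F x ∂κ‖ ≤ ε * ∫ x, ‖F x‖ ∂κ := by
    intro ε hε
    obtain ⟨p, hp⟩ := exists_polynomial_near_of_continuousOn a b g hg.continuousOn ε hε
    have hpg : ∫ x, g x • F x ∂κ = -∫ x, (p.eval x - g x) • F x ∂κ := by
      simp_rw [sub_smul]
      rw [integral_sub (integrable_smul_of_ae_mem_Icc hκ hF p.continuous)
        (integrable_smul_of_ae_mem_Icc hκ hF hg),
        integral_eval_smul_eq_zero_of_forall_moment_eq_zero hκ hF hmom, zero_sub, neg_neg]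
    calc ‖∫ x, g x • F x ∂κ‖ = ‖∫ x, (p.eval x - g x) • F x ∂κ‖ := by rw [hpg, norm_neg]
      _ ≤ ∫ x, ε * ‖F x‖ ∂κ := by
        refine norm_integral_le_of_norm_le (hF.norm.const_mul ε) ?_
        filter_upwards [hκ] with x hx
        rw [norm_smul, Real.norm_eq_abs]
        exact mul_le_mul_of_nonneg_right (hp x hx).le (norm_nonneg _)
      _ = ε * ∫ x, ‖F x‖ ∂κ := integral_const_mul _ _
  refine norm_le_zero_iff.mp
    (ge_of_tendsto (x := 𝓝[>] 0) ?_ (eventually_nhdsWithin_of_forall hbound))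
  simpa using tendsto_nhdsWithin_of_tendsto_nhds
    ((continuous_mul_const (∫ x, ‖F x‖ ∂κ)).tendsto 0)

theorem ae_eq_zero_of_forall_moment_eq_zero [CompleteSpace E] (hκ : ∀ᵐ x ∂κ, x ∈ Icc a b)
    (hF : Integrable F κ) (hmom : ∀ n : ℕ, ∫ x, x ^ n • F x ∂κ = 0) : ∀ᵐ x ∂κ, F x = 0 :=
  ae_eq_zero_of_integral_contDiff_smul_eq_zero hF.locallyIntegrable fun _ hg _ =>
    integral_smul_eq_zero_of_forall_moment_eq_zero hκ hF hmom hg.continuous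

end Moments

theorem ae_eq_zero_of_forall_integral_exp_nat_mul_smul_eq_zero [CompleteSpace E]
    {ν : Measure ℝ} {G : ℝ → E} (hν : ∀ᵐ t ∂ν, 0 ≤ t) (hG : Integrable G ν)
    (hlap : ∀ n : ℕ, ∫ t, Real.exp (-(n * t)) • G t ∂ν = 0) : ∀ᵐ t ∂ν, G t = 0 := by
  set φ : ℝ → ℝ := fun t => Real.exp (-t)
  have hφ : MeasurableEmbedding φ :=
    (by fun_prop : Continuous φ).measurableEmbedding (Real.exp_injective.comp neg_injective)
  set F : ℝ → E := fun x => G (-Real.log x)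
  have hFφ : F ∘ φ = G := funext fun t => by simp [F, φ]
  have hκ : ∀ᵐ x ∂ν.map φ, x ∈ Icc 0 1 := by
    rw [hφ.ae_map_iff]
    filter_upwards [hν] with t ht
    exact ⟨(Real.exp_pos _).le, Real.exp_le_one_iff.mpr (neg_nonpos.mpr ht)⟩
  have hF : Integrable F (ν.map φ) := by rwa [hφ.integrable_map_iff, hFφ]
  have hmom : ∀ n : ℕ, ∫ x, x ^ n • F x ∂ν.map φ = 0 := by
    intro n
    rw [hφ.integral_map]
    simpa [φ, F, ← Real.exp_nat_mul] using hlap n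
  have hF0 := ae_eq_zero_of_forall_moment_eq_zero hκ hF hmom
  rw [hφ.ae_map_iff] at hF0
  simpa [F, φ] using hF0

theorem MeasureTheory.IntegrableOn.exp_neg_mul_smul_of_le {μ : Measure ℝ} {h : ℝ → E} {σ s : ℝ}
    (hσs : σ ≤ s) (hi : IntegrableOn (fun t => Real.exp (-(σ * t)) • h t) (Ici 0) μ) :
    IntegrableOn (fun t => Real.exp (-(s * t)) • h t) (Ici 0) μ := by
  have hbdd : ∀ᵐ t ∂μ.restrict (Ici 0), ‖Real.exp (-((s - σ) * t))‖ ≤ 1 := by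
    filter_upwards [ae_restrict_mem measurableSet_Ici] with t ht
    rw [Real.norm_eq_abs, abs_of_pos (Real.exp_pos _), Real.exp_le_one_iff]
    exact neg_nonpos.mpr (mul_nonneg (sub_nonneg.mpr hσs) ht)
  have hcont : Continuous fun t => Real.exp (-((s - σ) * t)) := by fun_prop
  refine (hi.bdd_smul 1 hcont.aestronglyMeasurable hbdd).congr (Eventually.of_forall fun t => ?_)
  change Real.exp (-((s - σ) * t)) • Real.exp (-(σ * t)) • h t = _
  rw [smul_smul, ← Real.exp_add]
  ring_nf

/-- **Uniqueness theorem for Laplace transforms with general abscissa `σ`.**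
If `t ↦ e^{-σt} hᵢ(t)` is `μ`-integrable on `[0,∞)` for `i = 1, 2` and the Laplace transforms
agree at every real `s ≥ σ`, then `h₁ = h₂` `μ`-almost everywhere. -/
theorem laplace_uniqueness_abscissa (σ : ℝ) (μ : Measure ℝ) (h₁ h₂ : ℝ → ℂ)
    (hi₁ : IntegrableOn (fun t => (Real.exp (-(σ * t)) : ℂ) * h₁ t) (Set.Ici 0) μ)
    (hi₂ : IntegrableOn (fun t => (Real.exp (-(σ * t)) : ℂ) * h₂ t) (Set.Ici 0) μ)
    (heq : ∀ s : ℝ, σ ≤ s →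
      ∫ t in Set.Ici (0 : ℝ), (Real.exp (-(s * t)) : ℂ) * h₁ t ∂μ =
      ∫ t in Set.Ici (0 : ℝ), (Real.exp (-(s * t)) : ℂ) * h₂ t ∂μ) :
    ∀ᵐ t ∂μ.restrict (Set.Ici 0), h₁ t = h₂ t := by
  simp_rw [← Complex.real_smul] at hi₁ hi₂ heq
  have hG : Integrable (fun t => Real.exp (-(σ * t)) • (h₁ t - h₂ t)) (μ.restrict (Ici 0)) := by
    simp only [smul_sub]
    exact hi₁.sub hi₂
  have hlap : ∀ n : ℕ,
      ∫ t in Ici 0, Real.exp (-(n * t)) • Real.exp (-(σ * t)) • (h₁ t - h₂ t) ∂μ = 0 := by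
    intro n
    have hσn : σ ≤ σ + n := le_add_of_nonneg_right n.cast_nonneg
    have hexp : ∀ t : ℝ, Real.exp (-(n * t)) • Real.exp (-(σ * t)) • (h₁ t - h₂ t) =
        Real.exp (-((σ + n) * t)) • h₁ t - Real.exp (-((σ + n) * t)) • h₂ t := fun t => by
      rw [smul_smul, ← Real.exp_add, smul_sub]
      ring_nf
    simp_rw [hexp]
    rw [integral_sub (hi₁.exp_neg_mul_smul_of_le hσn) (hi₂.exp_neg_mul_smul_of_le hσn),
      heq _ hσn, sub_self]
  filter_upwards [ae_eq_zero_of_forall_integral_exp_nat_mul_smul_eq_zero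
    (ae_restrict_mem measurableSet_Ici) hG hlap] with t ht
  exact sub_eq_zero.mp ((smul_eq_zero.mp ht).resolve_left (Real.exp_pos _).ne')
end

section
/- Let σ be a real number. Suppose (a_n)_{n≥1} and (b_n)_{n≥1} are sequences of complex numbers, and (λ_n)_{n≥1} and (μ_n)_{n≥1} are strictly increasing sequences of nonnegative real numbers tending to infinity, such that ∑_{n≥1} |a_n| e^{−λ_n σ} < ∞, ∑_{n≥1} |b_n| e^{−μ_n σ} < ∞, and ∑_{n≥1} a_n e^{−λ_n s} = ∑_{n≥1} b_n e^{−μ_n s} for every real s ≥ σ. Then the two series coincide term by term after discarding zero coefficients: for every n with a_n ≠ 0 there exists m with μ_m = λ_n and b_m = a_n, and for every m with b_m ≠ 0 there exists n with λ_n = μ_m and a_n = b_m. -/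
/-!
Encode a general Dirichlet series by its coefficient function `D : ℝ → ℂ`, the coefficient of
`e^{-ts}`; for exponents `lam` and coefficients `a` this is `Function.extend lam a 0`. Both
representations then give coefficient functions whose difference `D` has finite sublevel sets on its
support and whose series vanishes for `s ≥ σ`. If `D ≠ 0`, let `t₀` be the least exponent with
`D t₀ ≠ 0`. By dominated convergence `e^{t₀ s} ∑ D t e^{-ts} → D t₀` as `s → ∞`, whereas the left
side is eventually `0`; hence `D = 0`.
-/

open Filter Topology Function Set

lemma exists_isLeast_of_finite_inter_Iic {α : Type*} [LinearOrder α] {S : Set α}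
    (hS : ∀ B, (S ∩ Iic B).Finite) (hne : S.Nonempty) : ∃ t, IsLeast S t := by
  obtain ⟨t, ht⟩ := hne
  obtain ⟨m, ⟨hmS, hmt⟩, hmin⟩ := exists_min_image _ id (hS t) ⟨t, ht, le_rfl⟩
  exact ⟨m, hmS, fun u hu => (le_total u t).elim (fun hut => hmin u ⟨hu, hut⟩) hmt.trans⟩

section CoefficientFunction

variable {D : ℝ → ℂ} {σ : ℝ}

lemma summable_mul_exp_of_le (hfin : ∀ B, (support D ∩ Iic B).Finite)
    (hsum : Summable fun t => ‖D t‖ * Real.exp (-t * σ)) {s : ℝ} (hs : σ ≤ s) :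
    Summable fun t => D t * (Real.exp (-t * s) : ℂ) := by
  have hbound : ∀ t, (D t = 0 ∨ 0 ≤ t) →
      ‖D t * (Real.exp (-t * s) : ℂ)‖ ≤ ‖D t‖ * Real.exp (-t * σ) := by
    rintro t (hDt | ht)
    · simp [hDt]
    · rw [norm_mul, Complex.norm_real, Real.norm_of_nonneg (Real.exp_pos _).le]
      exact mul_le_mul_of_nonneg_left (Real.exp_le_exp.2 (by nlinarith)) (norm_nonneg _)
  refine hsum.of_norm_bounded_eventually (eventually_cofinite.2 ((hfin 0).subset fun t ht => ?_))
  exact ⟨fun hDt => ht (hbound t (.inl hDt)), not_lt.1 fun htpos => ht (hbound t (.inr htpos.le))⟩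

lemma tendsto_exp_mul_tsum_mul_exp {t₀ : ℝ} (ht₀ : t₀ ∈ lowerBounds (support D))
    (hsum : Summable fun t => ‖D t‖ * Real.exp (-t * σ)) :
    Tendsto (fun s : ℝ => (Real.exp (t₀ * s) : ℂ) * ∑' t, D t * (Real.exp (-t * s) : ℂ))
      atTop (𝓝 (D t₀)) := by
  have hshift : ∀ s : ℝ, (Real.exp (t₀ * s) : ℂ) * ∑' t, D t * (Real.exp (-t * s) : ℂ) =
      ∑' t, D t * (Real.exp ((t₀ - t) * s) : ℂ) := fun s => by
    rw [← tsum_mul_left]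
    congr 1 with t
    rw [sub_mul, sub_eq_add_neg, Real.exp_add, Complex.ofReal_mul, ← neg_mul]
    ring
  have hlim : ∀ t, Tendsto (fun s : ℝ => D t * (Real.exp ((t₀ - t) * s) : ℂ)) atTop
      (𝓝 (if t = t₀ then D t₀ else 0)) := by
    intro t
    split_ifs with ht
    · simp [ht]
    by_cases hDt : D t = 0
    · simp [hDt]
    have hlt : t₀ < t := lt_of_le_of_ne (ht₀ hDt) (Ne.symm ht)
    have hexp : Tendsto (fun s : ℝ => Real.exp ((t₀ - t) * s)) atTop (𝓝 0) :=
      Real.tendsto_exp_atBot.comp (tendsto_id.const_mul_atTop_of_neg (by linarith))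
    simpa using ((Complex.continuous_ofReal.tendsto 0).comp hexp).const_mul (D t)
  have hbound : ∀ᶠ s in atTop, ∀ t, ‖D t * (Real.exp ((t₀ - t) * s) : ℂ)‖ ≤
      Real.exp (t₀ * σ) * (‖D t‖ * Real.exp (-t * σ)) := by
    filter_upwards [eventually_ge_atTop σ] with s hs t
    by_cases hDt : D t = 0
    · simp [hDt]
    have hle : t₀ ≤ t := ht₀ hDt
    rw [norm_mul, Complex.norm_real, Real.norm_of_nonneg (Real.exp_pos _).le, mul_left_comm,
      ← Real.exp_add]
    gcongr
    nlinarith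
  simpa only [hshift, tsum_ite_eq] using
    tendsto_tsum_of_dominated_convergence (hsum.mul_left _) hlim hbound

lemma eq_zero_of_tsum_mul_exp_eq_zero (hfin : ∀ B, (support D ∩ Iic B).Finite)
    (hsum : Summable fun t => ‖D t‖ * Real.exp (-t * σ))
    (hzero : ∀ s, σ ≤ s → ∑' t, D t * (Real.exp (-t * s) : ℂ) = 0) : D = 0 := by
  by_contra hD
  obtain ⟨t₀, ht₀, hleast⟩ := exists_isLeast_of_finite_inter_Iic hfin (support_nonempty_iff.2 hD)
  have hzero_lim : Tendsto (fun s : ℝ => (Real.exp (t₀ * s) : ℂ) *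
      ∑' t, D t * (Real.exp (-t * s) : ℂ)) atTop (𝓝 0) :=
    tendsto_const_nhds.congr' <| by
      filter_upwards [eventually_ge_atTop σ] with s hs
      rw [hzero s hs, mul_zero]
  exact ht₀ (tendsto_nhds_unique (tendsto_exp_mul_tsum_mul_exp hleast hsum) hzero_lim)

lemma eq_of_tsum_mul_exp_eq {E : ℝ → ℂ} (hDfin : ∀ B, (support D ∩ Iic B).Finite)
    (hEfin : ∀ B, (support E ∩ Iic B).Finite)
    (hDsum : Summable fun t => ‖D t‖ * Real.exp (-t * σ))
    (hEsum : Summable fun t => ‖E t‖ * Real.exp (-t * σ))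
    (heq : ∀ s, σ ≤ s →
      ∑' t, D t * (Real.exp (-t * s) : ℂ) = ∑' t, E t * (Real.exp (-t * s) : ℂ)) : D = E := by
  refine sub_eq_zero.1 (eq_zero_of_tsum_mul_exp_eq_zero (σ := σ) (fun B => ?_) ?_ fun s hs => ?_)
  · exact ((hDfin B).union (hEfin B)).subset fun t ⟨ht, htB⟩ =>
      (support_sub D E ht).imp (⟨·, htB⟩) (⟨·, htB⟩)
  · refine (hDsum.add hEsum).of_nonneg_of_le (fun t => by positivity) fun t => ?_
    rw [← add_mul]
    exact mul_le_mul_of_nonneg_right (norm_sub_le _ _) (Real.exp_pos _).le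
  · simp only [Pi.sub_apply, sub_mul]
    rw [(summable_mul_exp_of_le hDfin hDsum hs).tsum_sub (summable_mul_exp_of_le hEfin hEsum hs),
      heq s hs, sub_self]

end CoefficientFunction

section Extend

variable {ι κ : Type*} {g : ι → ℝ} (f : ι → ℂ)

lemma finite_support_extend_zero_inter_Iic (hg : Tendsto g cofinite atTop) (B : ℝ) :
    (support (extend g f 0) ∩ Iic B).Finite := by
  refine ((eventually_cofinite.1 (hg.eventually_gt_atTop B)).image g).subset ?_
  rintro t ⟨ht, htB⟩
  obtain ⟨i, -, rfl⟩ := support_extend_zero_subset ht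
  exact ⟨i, not_lt.2 htB, rfl⟩

variable {f}

lemma Function.Injective.tsum_extend_zero_mul (hg : Injective g) (w : ℝ → ℂ) :
    ∑' t, extend g f 0 t * w t = ∑' i, f i * w (g i) := by
  rw [← hg.tsum_eq ((support_mul_subset_left _ _).trans
    (support_extend_zero_subset.trans (image_subset_range _ _)))]
  simp only [hg.extend_apply]

lemma Function.Injective.summable_norm_extend_zero_mul (hg : Injective g) {w : ℝ → ℝ}
    (hf : Summable fun i => ‖f i‖ * w (g i)) :
    Summable fun t => ‖extend g f 0 t‖ * w t := by
  refine (hg.summable_iff fun t ht => ?_).1 (by simpa only [comp_def, hg.extend_apply] using hf)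
  rw [extend_apply' _ _ _ ht, Pi.zero_apply, norm_zero, zero_mul]

lemma exists_eq_of_extend_zero_eq {h : κ → ℝ} {k : κ → ℂ} (hg : Injective g) (hh : Injective h)
    (hgh : extend g f 0 = extend h k 0) {i : ι} (hi : f i ≠ 0) : ∃ j, h j = g i ∧ k j = f i := by
  have hk : extend h k 0 (g i) = f i := by rw [← hgh, hg.extend_apply]
  by_cases hj : ∃ j, h j = g i
  · obtain ⟨j, hj⟩ := hj
    exact ⟨j, hj, by rw [← hk, ← hj, hh.extend_apply]⟩
  · rw [extend_apply' _ _ _ hj] at hk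
    exact absurd hk.symm hi

end Extend

theorem gds_uniqueness_general (σ : ℝ) (a b : ℕ → ℂ) (lam mu : ℕ → ℝ)
    (hlam_mono : StrictMono lam)
    (hlam_top : Tendsto lam atTop atTop)
    (hmu_mono : StrictMono mu)
    (hmu_top : Tendsto mu atTop atTop)
    (ha : Summable fun n => ‖a n‖ * Real.exp (-(lam n) * σ))
    (hb : Summable fun n => ‖b n‖ * Real.exp (-(mu n) * σ))
    (heq : ∀ s : ℝ, σ ≤ s →
      ∑' n, a n * (Real.exp (-(lam n) * s) : ℂ) = ∑' n, b n * (Real.exp (-(mu n) * s) : ℂ)) :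
    (∀ n, a n ≠ 0 → ∃ m, mu m = lam n ∧ b m = a n) ∧
      (∀ m, b m ≠ 0 → ∃ n, lam n = mu m ∧ a n = b m) := by
  have hAB : extend lam a 0 = extend mu b 0 :=
    eq_of_tsum_mul_exp_eq (σ := σ)
      (finite_support_extend_zero_inter_Iic a (Nat.cofinite_eq_atTop ▸ hlam_top))
      (finite_support_extend_zero_inter_Iic b (Nat.cofinite_eq_atTop ▸ hmu_top))
      (hlam_mono.injective.summable_norm_extend_zero_mul (w := fun t => Real.exp (-t * σ)) ha)
      (hmu_mono.injective.summable_norm_extend_zero_mul (w := fun t => Real.exp (-t * σ)) hb)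
      fun s hs => by
        rw [hlam_mono.injective.tsum_extend_zero_mul, hmu_mono.injective.tsum_extend_zero_mul,
          heq s hs]
  exact ⟨fun n hn => exists_eq_of_extend_zero_eq hlam_mono.injective hmu_mono.injective hAB hn,
    fun m hm => exists_eq_of_extend_zero_eq hmu_mono.injective hlam_mono.injective hAB.symm hm⟩

/-- **Uniqueness of absolutely convergent general Dirichlet series.**
If two absolutely convergent general Dirichlet series agree for all real `s ≥ σ`, then they
coincide term by term after discarding zero coefficients. -/
theorem gds_uniqueness (σ : ℝ) (a b : ℕ → ℂ) (lam mu : ℕ → ℝ)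
    (hlam_mono : StrictMono lam) (hlam_nonneg : ∀ n, 0 ≤ lam n)
    (hlam_top : Tendsto lam atTop atTop)
    (hmu_mono : StrictMono mu) (hmu_nonneg : ∀ n, 0 ≤ mu n)
    (hmu_top : Tendsto mu atTop atTop)
    (ha : Summable fun n => ‖a n‖ * Real.exp (-(lam n) * σ))
    (hb : Summable fun n => ‖b n‖ * Real.exp (-(mu n) * σ))
    (heq : ∀ s : ℝ, σ ≤ s →
      ∑' n, a n * (Real.exp (-(lam n) * s) : ℂ) = ∑' n, b n * (Real.exp (-(mu n) * s) : ℂ)) :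
    (∀ n, a n ≠ 0 → ∃ m, mu m = lam n ∧ b m = a n) ∧
      (∀ m, b m ≠ 0 → ∃ n, lam n = mu m ∧ a n = b m) :=
  gds_uniqueness_general σ a b lam mu hlam_mono hlam_top hmu_mono hmu_top ha hb heq
end

section
/- Let p and q be complex polynomials with q not identically zero. Suppose there exist a real σ, a sequence of complex numbers (a_n)_{n≥1}, and a strictly increasing sequence (λ_n)_{n≥1} of nonnegative reals tending to infinity, such that ∑_{n≥1} |a_n| e^{−λ_n σ} < ∞, q(s) ≠ 0 for all real s ≥ σ, and p(s)/q(s) = ∑_{n≥1} a_n e^{−λ_n s} for all real s ≥ σ. Then the rational function p/q is constant: there exists c ∈ ℂ with p = c·q as polynomials. -/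
/-!
An absolutely convergent general Dirichlet series `f` approaches its constant term `c`
exponentially fast: `f s - c = O(e^{-μ s})`, where `μ > 0` is the smallest positive exponent.
On `[σ, ∞)` the polynomial `p - c q` equals `q (f - c) = o(e^{μ s}) · O(e^{-μ s})`, so it tends
to `0` along the real axis, and a polynomial with this property vanishes.
-/

open Filter Asymptotics Topology Polynomial

theorem Polynomial.eq_zero_of_tendsto_eval_zero {α R : Type*} [NormedField R] {l : Filter α}
    [l.NeBot] (P : R[X]) {z : α → R} (hz : Tendsto (fun x => ‖z x‖) l atTop)
    (hP : Tendsto (fun x => P.eval (z x)) l (𝓝 0)) : P = 0 := by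
  by_cases hdeg : 0 < P.degree
  · exact absurd (by simpa using hP.norm)
      (not_tendsto_nhds_of_tendsto_atTop (P.tendsto_norm_atTop hdeg hz) 0)
  · rw [eq_C_of_degree_le_zero (not_lt.mp hdeg)] at hP ⊢
    simpa using hP

theorem Polynomial.isLittleO_eval_ofReal_exp (P : ℂ[X]) {μ : ℝ}
    (hμ : 0 < μ) : (fun s : ℝ => P.eval (s : ℂ)) =o[atTop] fun s => Real.exp (μ * s) := by
  simp only [eval_eq_sum_range]
  refine IsLittleO.fun_sum fun k _ => ?_
  have hk : (fun s : ℝ => P.coeff k * (s : ℂ) ^ k) =O[atTop] fun s : ℝ => s ^ k :=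
    IsBigO.of_bound ‖P.coeff k‖ (Eventually.of_forall fun s => by simp)
  exact hk.trans_isLittleO (isLittleO_pow_exp_pos_mul_atTop k hμ)

section DirichletSeries

variable {a : ℕ → ℂ} {lam : ℕ → ℝ} {σ : ℝ}

theorem summable_dirichlet_of_le (hlam : ∀ n, 0 ≤ lam n)
    (ha : Summable fun n => ‖a n‖ * Real.exp (-(lam n) * σ)) {s : ℝ} (hs : σ ≤ s) :
    Summable fun n => a n * (Real.exp (-(lam n) * s) : ℂ) := by
  refine Summable.of_norm_bounded ha fun n => ?_
  rw [norm_mul, Complex.norm_real, Real.norm_of_nonneg (Real.exp_pos _).le]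
  exact mul_le_mul_of_nonneg_left (Real.exp_le_exp.mpr (by nlinarith [hlam n])) (norm_nonneg _)

theorem isBigO_dirichlet_exp_of_le {μ : ℝ} (hμ : ∀ n, μ ≤ lam n)
    (ha : Summable fun n => ‖a n‖ * Real.exp (-(lam n) * σ)) :
    (fun s : ℝ => ∑' n, a n * (Real.exp (-(lam n) * s) : ℂ)) =O[atTop]
      fun s => Real.exp (-μ * s) := by
  refine IsBigO.of_bound ((∑' n, ‖a n‖ * Real.exp (-(lam n) * σ)) * Real.exp (μ * σ)) ?_
  filter_upwards [eventually_ge_atTop σ] with s hs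
  rw [Real.norm_of_nonneg (Real.exp_pos _).le, mul_assoc]
  refine tsum_of_norm_bounded (ha.hasSum.mul_right _) fun n => ?_
  rw [norm_mul, Complex.norm_real, Real.norm_of_nonneg (Real.exp_pos _).le, mul_assoc,
    ← Real.exp_add, ← Real.exp_add]
  exact mul_le_mul_of_nonneg_left (Real.exp_le_exp.mpr (by nlinarith [hμ n])) (norm_nonneg _)

theorem exists_dirichlet_sub_isBigO_exp (hmono : StrictMono lam) (hlam : ∀ n, 0 ≤ lam n)
    (ha : Summable fun n => ‖a n‖ * Real.exp (-(lam n) * σ)) :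
    ∃ c : ℂ, ∃ μ > 0, (fun s : ℝ => (∑' n, a n * (Real.exp (-(lam n) * s) : ℂ)) - c) =O[atTop]
      fun s => Real.exp (-μ * s) := by
  rcases (hlam 0).eq_or_lt with h0 | h0
  · refine ⟨a 0, lam 1, h0 ▸ hmono zero_lt_one, ?_⟩
    have htail := isBigO_dirichlet_exp_of_le (a := fun n => a (n + 1))
      (fun n => hmono.monotone (Nat.le_add_left 1 n)) ((summable_nat_add_iff 1).mpr ha)
    refine htail.congr' ?_ EventuallyEq.rfl
    filter_upwards [eventually_ge_atTop σ] with s hs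
    rw [(summable_dirichlet_of_le hlam ha hs).tsum_eq_zero_add, ← h0]
    simp
  · exact ⟨0, lam 0, h0, by
      simpa using isBigO_dirichlet_exp_of_le (fun n => hmono.monotone n.zero_le) ha⟩

end DirichletSeries

theorem rational_fraction_of_gds_general (p q : Polynomial ℂ)
    (σ : ℝ) (a : ℕ → ℂ) (lam : ℕ → ℝ)
    (hlam_mono : StrictMono lam) (hlam_nonneg : ∀ n, 0 ≤ lam n)
    (ha : Summable fun n => ‖a n‖ * Real.exp (-(lam n) * σ))
    (hq0 : ∀ s : ℝ, σ ≤ s → q.eval (s : ℂ) ≠ 0)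
    (heq : ∀ s : ℝ, σ ≤ s →
      p.eval (s : ℂ) / q.eval (s : ℂ) = ∑' n, a n * (Real.exp (-(lam n) * s) : ℂ)) :
    ∃ c : ℂ, p = c • q := by
  obtain ⟨c, μ, hμ, hdecay⟩ := exists_dirichlet_sub_isBigO_exp hlam_mono hlam_nonneg ha
  have hprod := (q.isLittleO_eval_ofReal_exp hμ).mul_isBigO hdecay
  have hlim : Tendsto (fun s : ℝ => (p - c • q).eval (s : ℂ)) atTop (𝓝 0) := by
    refine (isLittleO_one_iff ℝ).mp (hprod.congr' ?_ ?_)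
    · filter_upwards [eventually_ge_atTop σ] with s hs
      rw [← heq s hs, eval_sub, eval_smul, smul_eq_mul]
      field_simp [hq0 s hs]
    · exact Eventually.of_forall fun s => by simp [← Real.exp_add]
  refine ⟨c, sub_eq_zero.mp (eq_zero_of_tendsto_eval_zero _ ?_ hlim)⟩
  simpa using tendsto_abs_atTop_atTop

/-- **A non-constant rational function is not represented by an absolutely convergent
general Dirichlet series.** If `p/q` is represented on a real half-line `[σ,∞)` by an
absolutely convergent general Dirichlet series, then `p = c • q` for a constant `c`. -/
theorem rational_fraction_of_gds (p q : Polynomial ℂ) (hq : q ≠ 0)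
    (σ : ℝ) (a : ℕ → ℂ) (lam : ℕ → ℝ)
    (hlam_mono : StrictMono lam) (hlam_nonneg : ∀ n, 0 ≤ lam n)
    (hlam_top : Tendsto lam atTop atTop)
    (ha : Summable fun n => ‖a n‖ * Real.exp (-(lam n) * σ))
    (hq0 : ∀ s : ℝ, σ ≤ s → q.eval (s : ℂ) ≠ 0)
    (heq : ∀ s : ℝ, σ ≤ s →
      p.eval (s : ℂ) / q.eval (s : ℂ) = ∑' n, a n * (Real.exp (-(lam n) * s) : ℂ)) :
    ∃ c : ℂ, p = c • q :=
  rational_fraction_of_gds_general p q σ a lam hlam_mono hlam_nonneg ha hq0 heq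
end

section
/- Let μ be a (nonnegative) measure on [0,∞) and let h : [0,∞) → ℂ be μ-integrable such that ∫_{[0,∞)} e^{−s t} h(t) dμ(t) = 0 for every real s ≥ 0. Then for every continuous function f : [0,1] → ℂ one has ∫_{[0,∞)} f(e^{−t}) h(t) dμ(t) = 0. -/
/-!
Since `h` is integrable, `g ↦ ∫ g(e^{-t}) h(t) dμ` is a bounded linear functional on continuous
functions on `[0,1]` with the sup norm. It vanishes on the monomials `x ^ n`, these being the
Laplace transform at `s = n`, hence on all polynomials, which are dense by Weierstrass.
-/

open MeasureTheory Polynomial Set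

theorem Complex.exists_polynomial_near_of_continuousOn {a b : ℝ} {f : ℝ → ℂ}
    (hf : ContinuousOn f (Icc a b)) {ε : ℝ} (hε : 0 < ε) :
    ∃ p : ℂ[X], ∀ x ∈ Icc a b, ‖p.eval (x : ℂ) - f x‖ < ε := by
  obtain ⟨p, hp⟩ := _root_.exists_polynomial_near_of_continuousOn a b (fun x => (f x).re)
    (continuous_re.comp_continuousOn hf) (ε / 2) (half_pos hε)
  obtain ⟨q, hq⟩ := _root_.exists_polynomial_near_of_continuousOn a b (fun x => (f x).im)
    (continuous_im.comp_continuousOn hf) (ε / 2) (half_pos hε)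
  refine ⟨p.map ofRealHom + C I * q.map ofRealHom, fun x hx => ?_⟩
  have heval : (p.map ofRealHom + C I * q.map ofRealHom).eval (x : ℂ)
      = ((p.eval x : ℝ) : ℂ) + I * ((q.eval x : ℝ) : ℂ) := by
    simp only [eval_add, eval_mul, eval_C, eval_map, ← ofRealHom_eq_coe, eval₂_at_apply]
  calc _ ≤ |p.eval x - (f x).re| + |q.eval x - (f x).im| := by
        rw [heval]
        simpa using
          norm_le_abs_re_add_abs_im (((p.eval x : ℝ) : ℂ) + I * ((q.eval x : ℝ) : ℂ) - f x)
    _ < ε / 2 + ε / 2 := add_lt_add (hp x hx) (hq x hx)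
    _ = ε := add_halves ε

lemma Real.exp_neg_mem_Icc {t : ℝ} (ht : 0 ≤ t) : Real.exp (-t) ∈ Icc (0 : ℝ) 1 :=
  ⟨(Real.exp_pos _).le, Real.exp_le_one_iff.mpr (neg_nonpos.mpr ht)⟩

section LaplaceFunctional

variable {μ : Measure ℝ} {h : ℝ → ℂ}

lemma integrableOn_comp_exp_neg_mul (hi : IntegrableOn h (Ici 0) μ) {F : ℝ → ℂ}
    (hF : ContinuousOn F (Icc 0 1)) :
    IntegrableOn (fun t => F (Real.exp (-t)) * h t) (Ici 0) μ := by
  obtain ⟨M, hM⟩ := isCompact_Icc.exists_bound_of_continuousOn hF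
  refine hi.bdd_mul (c := M) ?_ ?_
  · exact (hF.comp (by fun_prop) fun t ht => Real.exp_neg_mem_Icc ht).aestronglyMeasurable
      measurableSet_Ici
  · filter_upwards [ae_restrict_mem measurableSet_Ici] with t ht
    exact hM _ (Real.exp_neg_mem_Icc ht)

lemma norm_integral_comp_exp_neg_sub_le (hi : IntegrableOn h (Ici 0) μ) {F G : ℝ → ℂ}
    (hF : ContinuousOn F (Icc 0 1)) (hG : ContinuousOn G (Icc 0 1)) {δ : ℝ}
    (hFG : ∀ x ∈ Icc (0 : ℝ) 1, ‖F x - G x‖ ≤ δ) :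
    ‖∫ t in Ici 0, F (Real.exp (-t)) * h t ∂μ - ∫ t in Ici 0, G (Real.exp (-t)) * h t ∂μ‖
      ≤ δ * ∫ t in Ici 0, ‖h t‖ ∂μ := by
  rw [← integral_sub (integrableOn_comp_exp_neg_mul hi hF) (integrableOn_comp_exp_neg_mul hi hG),
    ← integral_const_mul]
  refine norm_integral_le_of_norm_le (hi.norm.const_mul δ) ?_
  filter_upwards [ae_restrict_mem measurableSet_Ici] with t ht
  rw [← sub_mul, norm_mul]
  exact mul_le_mul_of_nonneg_right (hFG _ (Real.exp_neg_mem_Icc ht)) (norm_nonneg _)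

lemma integral_polynomial_eval_exp_neg_mul_eq_zero (hi : IntegrableOn h (Ici 0) μ)
    (heq : ∀ n : ℕ, ∫ t in Ici (0 : ℝ), (Real.exp (-(n * t)) : ℂ) * h t ∂μ = 0) (p : ℂ[X]) :
    ∫ t in Ici 0, p.eval (Real.exp (-t) : ℂ) * h t ∂μ = 0 := by
  have hmonomial (n : ℕ) (t : ℝ) : (Real.exp (-(n * t)) : ℂ) = (Real.exp (-t) : ℂ) ^ n := by
    rw [← Complex.ofReal_pow, ← Real.exp_nat_mul, mul_neg]
  simp only [eval_eq_sum_range, Finset.sum_mul, mul_assoc]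
  rw [integral_finsetSum]
  · refine Finset.sum_eq_zero fun n _ => ?_
    simp only [integral_const_mul, ← hmonomial, heq, mul_zero]
  · exact fun n _ => (integrableOn_comp_exp_neg_mul hi
      (F := fun x => (x : ℂ) ^ n) (by fun_prop)).const_mul _

end LaplaceFunctional

/-- **Stone–Weierstrass step of the Laplace uniqueness theorem.**
If `h` is `μ`-integrable on `[0,∞)` and `∫ e^{-st} h(t) dμ = 0` for every real `s ≥ 0`, then
`∫ f(e^{-t}) h(t) dμ = 0` for every function `f` continuous on `[0,1]`. -/
theorem integral_comp_exp_eq_zero (μ : Measure ℝ) (h : ℝ → ℂ)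
    (hi : IntegrableOn h (Set.Ici 0) μ)
    (heq : ∀ s : ℝ, 0 ≤ s → ∫ t in Set.Ici (0 : ℝ), (Real.exp (-(s * t)) : ℂ) * h t ∂μ = 0) :
    ∀ f : ℝ → ℂ, ContinuousOn f (Set.Icc 0 1) →
      ∫ t in Set.Ici (0 : ℝ), f (Real.exp (-t)) * h t ∂μ = 0 := by
  intro f hf
  have hpoly := integral_polynomial_eval_exp_neg_mul_eq_zero hi fun n => heq n n.cast_nonneg
  set C := ∫ t in Ici 0, ‖h t‖ ∂μ
  have hC : 0 ≤ C := integral_nonneg fun t => norm_nonneg _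
  refine norm_le_zero_iff.mp (le_of_forall_pos_le_add fun ε hε => ?_)
  obtain ⟨p, hp⟩ := Complex.exists_polynomial_near_of_continuousOn hf
    (div_pos hε (by positivity : 0 < C + 1))
  calc ‖∫ t in Ici 0, f (Real.exp (-t)) * h t ∂μ‖
      = ‖∫ t in Ici 0, f (Real.exp (-t)) * h t ∂μ
          - ∫ t in Ici 0, p.eval (Real.exp (-t) : ℂ) * h t ∂μ‖ := by rw [hpoly, sub_zero]
    _ ≤ ε / (C + 1) * C := norm_integral_comp_exp_neg_sub_le hi hf
        (G := fun x : ℝ => p.eval (x : ℂ)) (by fun_prop)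
        fun x hx => by rw [norm_sub_rev]; exact (hp x hx).le
    _ ≤ 0 + ε := by
        rw [zero_add, div_mul_eq_mul_div, div_le_iff₀ (by positivity)]
        nlinarith
end

section
/- Let μ be a (nonnegative) measure on [0,∞) and let h : [0,∞) → ℂ be μ-integrable such that ∫_{[0,∞)} f(e^{−t}) h(t) dμ(t) = 0 for every continuous function f : [0,1] → ℂ. Then ∫_{[a,b]} h(t) dμ(t) = 0 for all reals 0 ≤ a ≤ b, and consequently h = 0 μ-almost everywhere. -/
/-!
Every smooth compactly supported `g` on `ℝ` is of the form `t ↦ f (e^{-t})` with `f` continuous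
on `[0, 1]`: take `f x = g (-log x)` for `x > 0` and `f 0 = 0`, continuous at `0` because `g`
vanishes near `+∞`. So `h` integrates to zero against every test function for the measure
`μ` restricted to `[0, ∞)`, hence vanishes almost everywhere for it, and all its integrals over
subintervals of `[0, ∞)` vanish.
-/

open MeasureTheory Filter Set Topology

theorem exists_continuousOn_Ici_comp_exp_neg_eq {E : Type*} [TopologicalSpace E] [Zero E]
    {g : ℝ → E} (hg : Continuous g) (hg0 : Tendsto g atTop (𝓝 0)) :
    ∃ f : ℝ → E, ContinuousOn f (Ici 0) ∧ ∀ t, f (Real.exp (-t)) = g t := by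
  refine ⟨fun x => if 0 < x then g (-Real.log x) else 0, fun x hx => ?_,
    fun t => by simp [Real.exp_pos]⟩
  rcases (mem_Ici.1 hx).eq_or_lt with rfl | hx
  · rw [← continuousWithinAt_Ioi_iff_Ici, ContinuousWithinAt, if_neg (lt_irrefl 0)]
    refine (hg0.comp (tendsto_neg_atBot_atTop.comp Real.tendsto_log_nhdsGT_zero)).congr' ?_
    filter_upwards [self_mem_nhdsWithin] with y hy
    simp [if_pos (show (0 : ℝ) < y from hy)]
  · have hlog := Real.continuousAt_log hx.ne'
    refine ContinuousAt.continuousWithinAt <|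
      ContinuousAt.congr (f := fun y => g (-Real.log y)) (by fun_prop) ?_
    filter_upwards [lt_mem_nhds hx] with y hy
    simp [hy]

/-- **Final step of the Laplace uniqueness theorem.**
If `h` is `μ`-integrable on `[0,∞)` and `∫ f(e^{-t}) h(t) dμ = 0` for every function `f`
continuous on `[0,1]`, then `∫_{[a,b]} h dμ = 0` for all `0 ≤ a ≤ b`, and consequently
`h = 0` `μ`-almost everywhere on `[0,∞)`. -/
theorem measure_zero_of_integral_comp_exp (μ : Measure ℝ) (h : ℝ → ℂ)
    (hi : IntegrableOn h (Set.Ici 0) μ)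
    (heq : ∀ f : ℝ → ℂ, ContinuousOn f (Set.Icc 0 1) →
      ∫ t in Set.Ici (0 : ℝ), f (Real.exp (-t)) * h t ∂μ = 0) :
    (∀ a b : ℝ, 0 ≤ a → a ≤ b → ∫ t in Set.Icc a b, h t ∂μ = 0) ∧
      (∀ᵐ t ∂μ.restrict (Set.Ici 0), h t = 0) := by
  have hae : ∀ᵐ t ∂μ.restrict (Ici 0), h t = 0 := by
    refine ae_eq_zero_of_integral_contDiff_smul_eq_zero hi.locallyIntegrable fun g hg hgc => ?_
    have hg0 : Tendsto (fun t => (g t : ℂ)) atTop (𝓝 0) :=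
      ((hgc.comp_left Complex.ofReal_zero).is_zero_at_infty).mono_left atTop_le_cocompact
    obtain ⟨f, hf, hfg⟩ := exists_continuousOn_Ici_comp_exp_neg_eq (by fun_prop) hg0
    simpa [hfg, Complex.real_smul] using heq f (hf.mono Icc_subset_Ici_self)
  refine ⟨fun a b ha _ => ?_, hae⟩
  rw [← Measure.restrict_restrict_of_subset (Icc_subset_Ici_self.trans (Ici_subset_Ici.2 ha))]
  exact integral_eq_zero_of_ae (ae_restrict_of_ae hae)
end
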